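/- arXiv:2507.01491 — 2 statements merged into one kernel-verified Lean document; each statement's English description precedes it below -/
import Mathlib

section
/- Let a, b, ω, ω_l be real numbers with ω > 0 and ω_l > 0, and define θ(ω_f) = arctan(b / (a + ω_l/(ω_f - ω_l))) + arctan(ω/ω_l) - arctan(ω/ω_f) for ω_f > ω_l. If a > 0 and b > 0, then θ is strictly monotonically increasing in ω_f on (ω_l, ∞), so its supremum over ω_f ∈ (ω_l, ∞) equals the limit as ω_f → ∞, namely arctan(b/a) + arctan(ω/ω_l). -/
/-!
Both terms of θ that depend on ω_f increase with it: the denominator a + ω_l/(ω_f - ω_l) of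
the first decreases, and the subtracted arctan(ω/ω_f) decreases. A monotone function on
(ω_l, ∞) has its limit at infinity as supremum.
-/

open Real Set Filter Topology

theorem MonotoneOn.isLUB_image_Ioi_of_tendsto {α β : Type*} [TopologicalSpace α] [Preorder α]
    [OrderClosedTopology α] [LinearOrder β] [NoMaxOrder β] {f : β → α} {c : β} {L : α}
    (hf : MonotoneOn f (Ioi c)) (hL : Tendsto f atTop (𝓝 L)) : IsLUB (f '' Ioi c) L := by
  have : Nonempty β := ⟨c⟩
  constructor
  · rintro _ ⟨z, hz, rfl⟩
    refine ge_of_tendsto hL ?_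
    filter_upwards [eventually_ge_atTop z] with x hzx
    exact hf hz (lt_of_lt_of_le hz hzx) hzx
  · intro u hu
    refine le_of_tendsto hL ?_
    filter_upwards [eventually_gt_atTop c] with x hx
    exact hu (mem_image_of_mem f hx)

theorem strictAntiOn_div_sub {c : ℝ} (hc : 0 < c) (d : ℝ) :
    StrictAntiOn (fun x => c / (x - d)) (Ioi d) := fun _ hx _ _ hxy =>
  div_lt_div_of_pos_left hc (sub_pos.2 hx) (by linarith)

theorem strictMonoOn_arctan_div_add_div_sub {a b c : ℝ} (ha : 0 ≤ a) (hb : 0 < b) (hc : 0 < c) :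
    StrictMonoOn (fun x => arctan (b / (a + c / (x - c)))) (Ioi c) := by
  intro x hx y hy hxy
  have hdecr := strictAntiOn_div_sub hc c hx hy hxy
  have hpos : 0 < a + c / (y - c) := by
    have : 0 < c / (y - c) := div_pos hc (sub_pos.2 hy)
    linarith
  exact arctan_strictMono (div_lt_div_of_pos_left hb hpos (by simpa using hdecr))

theorem strictAntiOn_arctan_div {ω : ℝ} (hω : 0 < ω) :
    StrictAntiOn (fun x => arctan (ω / x)) (Ioi 0) := fun _ hx _ _ hxy =>
  arctan_strictMono (div_lt_div_of_pos_left hω hx hxy)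

theorem tendsto_arctan_div_add_div_sub (b c : ℝ) {a : ℝ} (ha : a ≠ 0) :
    Tendsto (fun x => arctan (b / (a + c / (x - c)))) atTop (𝓝 (arctan (b / a))) := by
  have hsub : Tendsto (fun x : ℝ => x - c) atTop atTop :=
    tendsto_atTop_add_const_right _ _ tendsto_id
  have hden : Tendsto (fun x => a + c / (x - c)) atTop (𝓝 a) := by
    simpa using tendsto_const_nhds.add (tendsto_const_nhds.div_atTop hsub)
  exact (continuous_arctan.tendsto _).comp (tendsto_const_nhds.div hden ha)

theorem tendsto_arctan_div_atTop (ω : ℝ) : Tendsto (fun x => arctan (ω / x)) atTop (𝓝 0) := by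
  have h := (continuous_arctan.tendsto 0).comp ((tendsto_const_nhds (x := ω)).div_atTop tendsto_id)
  rwa [arctan_zero] at h

noncomputable def cglpPhase (a b ω ωl ωf : ℝ) : ℝ :=
  arctan (b / (a + ωl / (ωf - ωl))) + arctan (ω / ωl) - arctan (ω / ωf)

theorem cglpPhase_strictMonoOn {a b ω ωl : ℝ} (ha : 0 ≤ a) (hb : 0 < b) (hω : 0 < ω)
    (hωl : 0 < ωl) : StrictMonoOn (cglpPhase a b ω ωl) (Ioi ωl) := by
  intro x hx y hy hxy
  have hgain := strictMonoOn_arctan_div_add_div_sub ha hb hωl hx hy hxy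
  have hlag := strictAntiOn_arctan_div hω (lt_trans hωl hx) (lt_trans hωl hy) hxy
  simp only [cglpPhase] at hgain hlag ⊢
  linarith

theorem tendsto_cglpPhase_atTop (b ω ωl : ℝ) {a : ℝ} (ha : a ≠ 0) :
    Tendsto (cglpPhase a b ω ωl) atTop (𝓝 (arctan (b / a) + arctan (ω / ωl))) := by
  have h := ((tendsto_arctan_div_add_div_sub b ωl ha).add_const (arctan (ω / ωl))).sub
    (tendsto_arctan_div_atTop ω)
  rwa [sub_zero] at h

theorem cglp_phase_strictMono_sup
    (a b ω ωl : ℝ) (hω : ω > 0) (hωl : ωl > 0) (ha : a > 0) (hb : b > 0)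
    (θ : ℝ → ℝ)
    (hθ : ∀ ωf, ωf > ωl →
      θ ωf = arctan (b / (a + ωl / (ωf - ωl))) + arctan (ω / ωl) - arctan (ω / ωf)) :
    StrictMonoOn θ (Ioi ωl) ∧
      sSup (θ '' Ioi ωl) = arctan (b / a) + arctan (ω / ωl) := by
  have hθ_eq : EqOn (cglpPhase a b ω ωl) θ (Ioi ωl) := fun x hx => (hθ x hx).symm
  have hmono : StrictMonoOn θ (Ioi ωl) := (cglpPhase_strictMonoOn ha.le hb hω hωl).congr hθ_eq
  have hlim : Tendsto θ atTop (𝓝 (arctan (b / a) + arctan (ω / ωl))) :=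
    (tendsto_cglpPhase_atTop b ω ωl ha.ne').congr' <|
      eventually_of_mem (Ioi_mem_atTop ωl) hθ_eq
  exact ⟨hmono, (hmono.monotoneOn.isLUB_image_Ioi_of_tendsto hlim).csSup_eq
    (nonempty_Ioi.image θ)⟩
end

section
/- Let ω_r > 0, A_ρ ∈ (−1,1), Θ_D(ω) → Θ_∞ > 0 as ω → ∞, and consider the conventional CgLp numerator H₁⁰(ω) = ω_r(jω + ω_r)^{−1}(1 + jΘ_D(ω)) (zero feedthrough) and for n = 3, H₃(ω) = ω_r(3jω + ω_r)^{−1} jΘ_D(ω). Then lim_{ω→∞} |H₃(ω)|/|H₁⁰(ω)| = Θ_∞/(3√(1 + Θ_∞²)), which is strictly positive. -/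
/-!
Since `H₁` and `H₃` share the factor `ω_r`, their quotient splits as
`(jω + ω_r)/(3jω + ω_r) · jΘ_D/(1 + jΘ_D)`. The first factor tends to `1/3`, the second to
`jΘ_∞/(1 + jΘ_∞)`, whose modulus is `Θ_∞/√(1 + Θ_∞²)`.
-/

open Real Filter Topology Complex

lemma mul_inv_mul_div_mul_inv_mul {K : Type*} [Field K] {c : K} (hc : c ≠ 0) (x y p q : K) :
    c * x⁻¹ * p / (c * y⁻¹ * q) = y / x * (p / q) := by
  field_simp

lemma tendsto_affine_div_affine_atTop (u v a b : ℂ) (hv : v ≠ 0) :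
    Tendsto (fun ω : ℝ => (u * ω + a) / (v * ω + b)) atTop (𝓝 (u / v)) := by
  have hinv : Tendsto (fun ω : ℝ => ((ω : ℂ))⁻¹) atTop (𝓝 0) := by
    simpa using (tendsto_inv_atTop_zero (𝕜 := ℝ)).ofReal
  have hlim : Tendsto (fun ω : ℝ => (u + a * (ω : ℂ)⁻¹) / (v + b * (ω : ℂ)⁻¹)) atTop
      (𝓝 (u / v)) := by
    have h := ((hinv.const_mul a).const_add u).div ((hinv.const_mul b).const_add v)
      (by rwa [mul_zero, add_zero])
    rwa [mul_zero, mul_zero, add_zero, add_zero] at h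
  refine hlim.congr' ?_
  filter_upwards [eventually_gt_atTop 0] with ω hω
  have hω : (ω : ℂ) ≠ 0 := ofReal_ne_zero.2 hω.ne'
  rw [← mul_div_mul_right _ _ hω]
  field_simp

lemma one_add_I_mul_ofReal_ne_zero (θ : ℝ) : 1 + I * θ ≠ 0 := by
  intro h
  simpa using congrArg re h

lemma norm_I_mul_ofReal_div_one_add (θ : ℝ) :
    ‖I * θ / (1 + I * θ)‖ = |θ| / √(1 + θ ^ 2) := by
  rw [norm_div, mul_comm I, ← ofReal_one, norm_add_mul_I, norm_mul, norm_I, mul_one,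
    norm_real, Real.norm_eq_abs, one_pow]

theorem gfore_harmonic_ratio_limit_pos_general (ωr : ℝ) (hωr : 0 < ωr)
    (ΘD : ℝ → ℝ) (Θinf : ℝ) (hΘinf : 0 < Θinf) (hΘ : Tendsto ΘD atTop (𝓝 Θinf))
    (H₁ H₃ : ℝ → ℂ)
    (hH1 : ∀ ω : ℝ, H₁ ω = (ωr : ℂ) * (Complex.I * ω + ωr)⁻¹ * (1 + Complex.I * (ΘD ω)))
    (hH3 : ∀ ω : ℝ, H₃ ω = (ωr : ℂ) * (3 * Complex.I * ω + ωr)⁻¹ * (Complex.I * (ΘD ω))) :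
    Tendsto (fun ω : ℝ => ‖H₃ ω‖ / ‖H₁ ω‖) atTop
        (𝓝 (Θinf / (3 * Real.sqrt (1 + Θinf ^ 2)))) ∧
      0 < Θinf / (3 * Real.sqrt (1 + Θinf ^ 2)) := by
  refine ⟨?_, by positivity⟩
  have hωr' : (ωr : ℂ) ≠ 0 := ofReal_ne_zero.2 hωr.ne'
  have hsplit : ∀ ω : ℝ, H₃ ω / H₁ ω =
      (I * ω + ωr) / (3 * I * ω + ωr) * (I * ΘD ω / (1 + I * ΘD ω)) := fun ω => by
    rw [hH1, hH3, mul_inv_mul_div_mul_inv_mul hωr']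
  have hfirst := tendsto_affine_div_affine_atTop I (3 * I) ωr ωr (by simp)
  have hsecond : Tendsto (fun ω => I * ΘD ω / (1 + I * ΘD ω)) atTop
      (𝓝 (I * Θinf / (1 + I * Θinf))) :=
    (hΘ.ofReal.const_mul I).div (hΘ.ofReal.const_mul I |>.const_add 1)
      (one_add_I_mul_ofReal_ne_zero Θinf)
  have hlim := ((hfirst.mul hsecond).norm).congr fun ω => by rw [← hsplit, norm_div]
  have hvalue : I / (3 * I) = 1 / 3 := by field_simp
  rwa [norm_mul, hvalue, norm_I_mul_ofReal_div_one_add, abs_of_pos hΘinf, norm_div, norm_one,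
    Complex.norm_ofNat, one_div_mul_eq_div, div_div, mul_comm] at hlim

theorem gfore_harmonic_ratio_limit_pos (ωr Aρ : ℝ) (hωr : 0 < ωr)
    (hA : Aρ ∈ Set.Ioo (-1 : ℝ) 1)
    (ΘD : ℝ → ℝ) (Θinf : ℝ) (hΘinf : 0 < Θinf) (hΘ : Tendsto ΘD atTop (𝓝 Θinf))
    (H₁ H₃ : ℝ → ℂ)
    (hH1 : ∀ ω : ℝ, H₁ ω = (ωr : ℂ) * (Complex.I * ω + ωr)⁻¹ * (1 + Complex.I * (ΘD ω)))
    (hH3 : ∀ ω : ℝ, H₃ ω = (ωr : ℂ) * (3 * Complex.I * ω + ωr)⁻¹ * (Complex.I * (ΘD ω))) :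
    Tendsto (fun ω : ℝ => ‖H₃ ω‖ / ‖H₁ ω‖) atTop
        (𝓝 (Θinf / (3 * Real.sqrt (1 + Θinf ^ 2)))) ∧
      0 < Θinf / (3 * Real.sqrt (1 + Θinf ^ 2)) :=
  gfore_harmonic_ratio_limit_pos_general ωr hωr ΘD Θinf hΘinf hΘ H₁ H₃ hH1 hH3
end
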